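/- If a function y : [0,∞) → H (H a Hilbert space) satisfies: (i) for all 0 ≤ s ≤ t, |‖y(t)‖² − ‖y(s)‖²| ≤ M·(∫_s^t ‖y(r)‖_V² dr)^{1/2} for some constant M > 0 and some norm ‖·‖_V, and (ii) ∫_0^∞ ‖y(r)‖_V² dr < ∞, then ‖y(t)‖ → 0 as t → ∞. -/

import Mathlib

/-!
Write `f t = ‖y t‖²` and `F t = ∫₀ᵗ g`. Since `g` is integrable, `F` converges, hence is
Cauchy at infinity, and the oscillation bound `|f t - f s| ≤ M √(F t - F s)` transfers this to
`f`, so `f t → L` for some `L ≥ 0`. If `L > 0`, then `c g ≥ f ≥ L / 2` on a half-line, which is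
incompatible with the integrability of `g`; hence `L = 0`.
-/

open MeasureTheory Filter Set Topology

theorem cauchySeq_of_dist_le_mul_sqrt_dist {ι α β : Type*} [LinearOrder ι] [Nonempty ι]
    [PseudoMetricSpace α] [PseudoMetricSpace β] {f : ι → α} {F : ι → β} {M : ℝ} {a : ι}
    (hF : CauchySeq F)
    (h : ∀ s t, a ≤ s → s ≤ t → dist (f s) (f t) ≤ M * √(dist (F s) (F t))) :
    CauchySeq f := by
  rw [cauchySeq_iff_tendsto_dist_atTop_0] at hF ⊢
  have hbound : Tendsto (fun p : ι × ι => M * √(dist (F p.1) (F p.2))) atTop (𝓝 0) := by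
    simpa using hF.sqrt.const_mul M
  refine squeeze_zero' (Eventually.of_forall fun _ => dist_nonneg) ?_ hbound
  filter_upwards [eventually_ge_atTop (a, a)] with ⟨s, t⟩ ⟨hs, ht⟩
  rcases le_total s t with hst | hts
  · exact h s t hs hst
  · simpa only [dist_comm] using h t s ht hts

theorem nonpos_of_tendsto_of_eventually_le_integrableOn_Ici {f h : ℝ → ℝ} {a L : ℝ}
    (hh : IntegrableOn h (Ici a)) (hf : Tendsto f atTop (𝓝 L))
    (hle : ∀ᶠ t in atTop, f t ≤ h t) : L ≤ 0 := by
  by_contra! hL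
  obtain ⟨T, hT⟩ := eventually_atTop.mp
    ((hf.eventually (lt_mem_nhds (half_lt_self hL))).and (hle.and (eventually_ge_atTop a)))
  have hconst : IntegrableOn (fun _ => L / 2) (Ici T) := by
    refine (hh.mono_set fun t ht => (hT t ht).2.2).mono' aestronglyMeasurable_const ?_
    filter_upwards [self_mem_ae_restrict measurableSet_Ici] with t ht
    rw [Real.norm_of_nonneg (by positivity)]
    linarith [hT t ht]
  rcases (integrableOn_const_iff).mp hconst with h0 | hfin
  · exact hL.ne' (by simpa using h0)
  · simp at hfin

theorem stmt0_general
    {H : Type*} [NormedAddCommGroup H] [InnerProductSpace ℝ H]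
    (y : ℝ → H) (g : ℝ → ℝ) (M c : ℝ) (hM : 0 < M)
    (hdom : ∀ r, 0 ≤ r → ‖y r‖ ^ 2 ≤ c * g r)
    (hosc : ∀ s t : ℝ, 0 ≤ s → s ≤ t →
      |‖y t‖ ^ 2 - ‖y s‖ ^ 2| ≤ M * Real.sqrt (∫ r in s..t, g r))
    (hint : IntegrableOn g (Ici 0)) :
    Tendsto (fun t => ‖y t‖) atTop (nhds 0) := by
  set F : ℝ → ℝ := fun t => ∫ r in (0 : ℝ)..t, g r
  have hF : CauchySeq F :=
    (intervalIntegral_tendsto_integral_Ioi 0 (hint.mono_set Ioi_subset_Ici_self)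
      tendsto_id).cauchySeq
  have hI : ∀ t, 0 ≤ t → IntervalIntegrable g volume 0 t := fun t ht =>
    (hint.mono_set (by simp [uIcc_of_le ht, Icc_subset_Ici_self])).intervalIntegrable
  have hcauchy : CauchySeq fun t => ‖y t‖ ^ 2 := by
    refine cauchySeq_of_dist_le_mul_sqrt_dist (M := M) (a := 0) hF fun s t hs hst => ?_
    rw [Real.dist_eq, abs_sub_comm, Real.dist_eq, abs_sub_comm (F s),
      intervalIntegral.integral_interval_sub_left (hI t (hs.trans hst)) (hI s hs)]
    exact (hosc s t hs hst).trans
      (mul_le_mul_of_nonneg_left (Real.sqrt_le_sqrt (le_abs_self _)) hM.le)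
  obtain ⟨L, hL⟩ := cauchySeq_tendsto_of_complete hcauchy
  have hL_nonpos : L ≤ 0 :=
    nonpos_of_tendsto_of_eventually_le_integrableOn_Ici (hint.const_mul c) hL
      (eventually_ge_atTop 0 |>.mono hdom)
  have hL_zero : L = 0 := le_antisymm hL_nonpos (ge_of_tendsto' hL fun _ => by positivity)
  subst hL_zero
  simpa [Real.sqrt_sq (norm_nonneg _)] using hL.sqrt

/-- If `|‖y(t)‖² − ‖y(s)‖²| ≤ M (∫_s^t ‖y‖_V²)^{1/2}` with `g = ‖y‖_V²` integrable on `[0,∞)`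
(and the `V`-norm dominates the `H`-norm, as in the Gelfand triple `V ⊂ H`),
then `‖y(t)‖_H → 0` as `t → ∞`. -/
theorem stmt0
    {H : Type*} [NormedAddCommGroup H] [InnerProductSpace ℝ H]
    (y : ℝ → H) (g : ℝ → ℝ) (M c : ℝ) (hM : 0 < M) (hc : 0 < c)
    (hg_nonneg : ∀ r, 0 ≤ g r)
    (hdom : ∀ r, 0 ≤ r → ‖y r‖ ^ 2 ≤ c * g r)
    (hosc : ∀ s t : ℝ, 0 ≤ s → s ≤ t →
      |‖y t‖ ^ 2 - ‖y s‖ ^ 2| ≤ M * Real.sqrt (∫ r in s..t, g r))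
    (hint : IntegrableOn g (Ici 0)) :
    Tendsto (fun t => ‖y t‖) atTop (nhds 0) :=
  stmt0_general y g M c hM hdom hosc hint
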